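/- arXiv:1003.5301 — 2 statements merged into one kernel-verified Lean document; each statement's English description precedes it below -/
import Mathlib

section
/- Let α be the sequence with α_0=2 and α_m=3 for m≥1, and let β be the constant sequence β_m=1 for all m≥0. Then for every n≥1, Dyck_n(d) = Mot_{n-1}(α,β). -/
/-- A step of a Motzkin path: up `(1,1)`, down `(1,-1)`, or horizontal `(1,0)`. -/
inductive MStep : Type
  | up : MStep
  | down : MStep
  | flat : MStep
  deriving DecidableEq

instance instFintypeMStep : Fintype MStep :=
  ⟨{MStep.up, MStep.down, MStep.flat}, fun x => by cases x <;> simp⟩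

/-- The vertical displacement of a Motzkin step. -/
def MStep.val : MStep → ℤ
  | .up => 1
  | .down => -1
  | .flat => 0

/-- The height of the path after its first `k` steps. -/
def mHeight (l : List MStep) (k : ℕ) : ℤ := ((l.take k).map MStep.val).sum

/-- A list of steps is a Motzkin path if it never goes below the x-axis and ends at height 0. -/
def IsMotzkin (l : List MStep) : Prop :=
  (∀ k : ℕ, 0 ≤ mHeight l k) ∧ mHeight l l.length = 0

/-- The weight of a Motzkin path w.r.t. `(b, lam)`: a factor `b i` for every horizontal step
of height `i` and a factor `lam i` for every down step of height `i` (the height of a step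
being the `y`-coordinate of its ending point). -/
def mWeight (b lam : ℕ → ℚ) (l : List MStep) : ℚ :=
  ∏ i ∈ Finset.range l.length,
    match l.getD i MStep.up with
    | .up => 1
    | .flat => b (mHeight l (i + 1)).toNat
    | .down => lam (mHeight l (i + 1)).toNat

open Classical in
/-- `Mot_n(b,lam)`: the sum of the weights of all Motzkin paths of length `n`. -/
noncomputable def motSum (n : ℕ) (b lam : ℕ → ℚ) : ℚ :=
  ∑ f : Fin n → MStep,
    if IsMotzkin (List.ofFn f) then mWeight b lam (List.ofFn f) else 0

/-- A step of a Dyck path: up `(1,1)` or down `(1,-1)`. -/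
inductive DStep : Type
  | up : DStep
  | down : DStep
  deriving DecidableEq

instance instFintypeDStep : Fintype DStep :=
  ⟨{DStep.up, DStep.down}, fun x => by cases x <;> simp⟩

/-- The vertical displacement of a Dyck step. -/
def DStep.val : DStep → ℤ
  | .up => 1
  | .down => -1

/-- The height of the path after its first `k` steps. -/
def dHeight (l : List DStep) (k : ℕ) : ℤ := ((l.take k).map DStep.val).sum

/-- A list of steps is a Dyck path if it never goes below the x-axis and ends at height 0. -/
def IsDyck (l : List DStep) : Prop :=
  (∀ k : ℕ, 0 ≤ dHeight l k) ∧ dHeight l l.length = 0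

/-- The weight of a Dyck path w.r.t. `c`: a factor `c i` for every down step of height `i`
(the height of a step being the `y`-coordinate of its ending point). -/
def dWeight (c : ℕ → ℚ) (l : List DStep) : ℚ :=
  ∏ i ∈ Finset.range l.length,
    match l.getD i DStep.up with
    | .up => 1
    | .down => c (dHeight l (i + 1)).toNat

open Classical in
/-- `Dyck_n(c)`: the sum of the weights of all Dyck paths of length `2n`. -/
noncomputable def dyckSum (n : ℕ) (c : ℕ → ℚ) : ℚ :=
  ∑ f : Fin (2 * n) → DStep,
    if IsDyck (List.ofFn f) then dWeight c (List.ofFn f) else 0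

/-- Fibonacci numbers extended to all integer indices:
`fibZ 0 = 0`, `fibZ 1 = 1`, `fibZ m = fibZ (m-1) + fibZ (m-2)` (so `fibZ (-1) = 1`). -/
def fibZ : ℤ → ℤ
  | Int.ofNat n => Nat.fib n
  | Int.negSucc n => (-1) ^ n * Nat.fib (n + 1)

/-!
A Dyck path of length `2n + 2` starts with `U` and ends with `D`. Cutting the `2n` steps in
between into consecutive pairs, `UU`, `DD` and `UD`/`DU` become the up, down and flat steps of
a Motzkin path of length `n`, Dyck height `2h + 1` after a pair matching Motzkin height `h`.
Summing the weights of the pairs gives the contraction `Dyck_{n+1}(c) = c₀ · Mot_n(b, λ)` with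
`b_h = c_{2h} + c_{2h+1}` and `λ_h = c_{2h+1} c_{2h+2}`. For `c = d` this gives `λ_h = 1`,
`b_0 = 2`, and `b_h = 3` for `h ≥ 1` by `F_{m+2} + F_{m-2} = 3 F_m`.

The contraction is checked on the recurrence of weighted path prefixes by final height, reading
a Dyck path as a Motzkin path whose flat steps have weight `0`.
-/

def MStep.weight (b lam : ℕ → ℚ) : MStep → ℕ → ℚ
  | .up, _ => 1
  | .flat, h => b h
  | .down, h => lam h

lemma MStep.sum_univ (f : MStep → ℚ) : ∑ x, f x = f .up + f .down + f .flat := by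
  simp [Finset.univ, Fintype.elems, add_assoc]

lemma mWeight_eq_prod (b lam : ℕ → ℚ) (l : List MStep) :
    mWeight b lam l =
      ∏ i ∈ Finset.range l.length, (l.getD i .up).weight b lam (mHeight l (i + 1)).toNat := by
  unfold mWeight
  refine Finset.prod_congr rfl fun i _ => ?_
  cases l.getD i .up <;> rfl

lemma mHeight_of_length_le {l : List MStep} {k : ℕ} (hk : l.length ≤ k) :
    mHeight l k = mHeight l l.length := by
  simp [mHeight, List.take_of_length_le hk]

lemma mHeight_append_singleton_of_le (l : List MStep) (x : MStep) {k : ℕ} (hk : k ≤ l.length) :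
    mHeight (l ++ [x]) k = mHeight l k := by
  simp [mHeight, List.take_append_of_le_length hk]

lemma mHeight_append_singleton_length (l : List MStep) (x : MStep) :
    mHeight (l ++ [x]) (l.length + 1) = mHeight l l.length + x.val := by
  simp [mHeight]

lemma mWeight_append_singleton (b lam : ℕ → ℚ) (l : List MStep) (x : MStep) :
    mWeight b lam (l ++ [x]) =
      mWeight b lam l * x.weight b lam (mHeight l l.length + x.val).toNat := by
  rw [mWeight_eq_prod, mWeight_eq_prod, List.length_append, List.length_singleton,
    Finset.prod_range_succ, List.getD_append_right _ _ _ _ le_rfl, Nat.sub_self,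
    mHeight_append_singleton_length]
  congr 1
  refine Finset.prod_congr rfl fun i hi => ?_
  have hi : i < l.length := Finset.mem_range.mp hi
  rw [List.getD_append _ _ _ _ hi, mHeight_append_singleton_of_le _ _ hi]

lemma nonneg_mHeight_append_singleton_iff (l : List MStep) (x : MStep) :
    (∀ k, 0 ≤ mHeight (l ++ [x]) k) ↔
      (∀ k, 0 ≤ mHeight l k) ∧ 0 ≤ mHeight l l.length + x.val := by
  constructor
  · intro h
    refine ⟨fun k => ?_, mHeight_append_singleton_length l x ▸ h _⟩
    rcases le_total k l.length with hk | hk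
    · simpa [mHeight_append_singleton_of_le l x hk] using h k
    · simpa [mHeight_of_length_le hk, mHeight_append_singleton_of_le l x le_rfl] using h l.length
  · rintro ⟨hl, hx⟩ k
    rcases le_or_gt k l.length with hk | hk
    · rw [mHeight_append_singleton_of_le l x hk]; exact hl k
    · rw [mHeight_of_length_le (by simpa using hk), List.length_append, List.length_singleton,
        mHeight_append_singleton_length]
      exact hx

open Classical in
noncomputable def prefixWeight (b lam : ℕ → ℚ) (l : List MStep) (h : ℤ) : ℚ :=
  if (∀ k, 0 ≤ mHeight l k) ∧ mHeight l l.length = h then mWeight b lam l else 0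

lemma prefixWeight_of_neg (b lam : ℕ → ℚ) (l : List MStep) {h : ℤ} (hh : h < 0) :
    prefixWeight b lam l h = 0 :=
  if_neg fun hl => (hl.1 l.length).not_gt (hl.2 ▸ hh)

lemma prefixWeight_append_singleton (b lam : ℕ → ℚ) (l : List MStep) (x : MStep) {h : ℤ}
    (hh : 0 ≤ h) :
    prefixWeight b lam (l ++ [x]) h =
      x.weight b lam h.toNat * prefixWeight b lam l (h - x.val) := by
  unfold prefixWeight
  rw [nonneg_mHeight_append_singleton_iff, List.length_append, List.length_singleton,
    mHeight_append_singleton_length, mWeight_append_singleton]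
  split_ifs with h1 h2 h2
  · rw [h1.2, mul_comm]
  · exact absurd ⟨h1.1.1, by linarith [h1.2]⟩ h2
  · exact absurd ⟨⟨h2.1, by linarith [h2.2]⟩, by linarith [h2.2]⟩ h1
  · rw [mul_zero]

noncomputable def motPrefixSum (n : ℕ) (b lam : ℕ → ℚ) (h : ℕ) : ℚ :=
  ∑ f : Fin n → MStep, prefixWeight b lam (List.ofFn f) h

lemma motSum_eq_motPrefixSum (n : ℕ) (b lam : ℕ → ℚ) :
    motSum n b lam = motPrefixSum n b lam 0 := by
  classical
  exact Finset.sum_congr rfl fun f _ => if_congr (by simp [IsMotzkin]) rfl rfl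

lemma motPrefixSum_zero (b lam : ℕ → ℚ) (h : ℕ) :
    motPrefixSum 0 b lam h = if h = 0 then 1 else 0 := by
  simp [motPrefixSum, prefixWeight, mHeight, mWeight, eq_comm]

lemma motPrefixSum_succ (n : ℕ) (b lam : ℕ → ℚ) (h : ℕ) :
    motPrefixSum (n + 1) b lam h =
      (if h = 0 then 0 else motPrefixSum n b lam (h - 1)) + b h * motPrefixSum n b lam h +
        lam h * motPrefixSum n b lam (h + 1) := by
  rw [motPrefixSum, ← (Fin.snocEquiv fun _ => MStep).sum_comp, Fintype.sum_prod_type,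
    MStep.sum_univ]
  simp only [Fin.snocEquiv_apply, List.ofFn_succ', Fin.snoc_castSucc, Fin.snoc_last,
    List.concat_eq_append, prefixWeight_append_singleton _ _ _ _ (Int.natCast_nonneg h),
    ← Finset.mul_sum, MStep.weight, MStep.val, Int.toNat_natCast, sub_zero, sub_neg_eq_add]
  have up_step : ∑ f : Fin n → MStep, prefixWeight b lam (List.ofFn f) ((h : ℤ) - 1) =
      if h = 0 then 0 else motPrefixSum n b lam (h - 1) := by
    rcases h with _ | h
    · exact Finset.sum_eq_zero fun f _ => prefixWeight_of_neg _ _ _ (by norm_num)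
    · simp [motPrefixSum]
  rw [up_step, one_mul]
  simp only [motPrefixSum, Nat.cast_add, Nat.cast_one]
  ring

def DStep.toMStep : DStep → MStep
  | .up => .up
  | .down => .down

lemma DStep.toMStep_injective : Function.Injective DStep.toMStep := by
  intro s t; cases s <;> cases t <;> simp [DStep.toMStep]

lemma mHeight_map_toMStep (l : List DStep) (k : ℕ) :
    mHeight (l.map DStep.toMStep) k = dHeight l k := by
  have hval : MStep.val ∘ DStep.toMStep = DStep.val := by
    funext s; cases s <;> rfl
  simp [mHeight, dHeight, ← List.map_take, hval]

lemma isMotzkin_map_toMStep_iff (l : List DStep) :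
    IsMotzkin (l.map DStep.toMStep) ↔ IsDyck l := by
  simp [IsMotzkin, IsDyck, mHeight_map_toMStep]

lemma mWeight_map_toMStep (c : ℕ → ℚ) (l : List DStep) :
    mWeight (fun _ => 0) c (l.map DStep.toMStep) = dWeight c l := by
  rw [mWeight_eq_prod, List.length_map]
  refine Finset.prod_congr rfl fun i _ => ?_
  rw [show MStep.up = DStep.up.toMStep from rfl, List.getD_map, mHeight_map_toMStep]
  cases l.getD i .up <;> rfl

lemma mWeight_eq_zero_of_flat {c : ℕ → ℚ} {n : ℕ} (f : Fin n → MStep) (i : Fin n)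
    (hi : f i = .flat) : mWeight (fun _ => 0) c (List.ofFn f) = 0 := by
  rw [mWeight_eq_prod]
  refine Finset.prod_eq_zero (i := i) (by simp) ?_
  rw [List.getD_eq_getElem _ _ (by simp), List.getElem_ofFn, hi]
  rfl

lemma dyckSum_eq_motSum (n : ℕ) (c : ℕ → ℚ) :
    dyckSum n c = motSum (2 * n) (fun _ => 0) c := by
  classical
  refine Fintype.sum_of_injective (fun g => DStep.toMStep ∘ g)
    DStep.toMStep_injective.comp_left _ _ (fun f hf => ?_) (fun g => ?_)
  · obtain ⟨i, hi⟩ : ∃ i, f i = .flat := by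
      by_contra! h
      have hpre : ∀ i, ∃ s, DStep.toMStep s = f i := fun i => by
        cases hfi : f i
        exacts [⟨.up, rfl⟩, ⟨.down, rfl⟩, absurd hfi (h i)]
      choose g hg using hpre
      exact hf ⟨g, funext hg⟩
    rw [mWeight_eq_zero_of_flat f i hi, ite_self]
  · rw [← List.map_ofFn, isMotzkin_map_toMStep_iff, mWeight_map_toMStep]

lemma motPrefixSum_add_two_of_flat_zero (n : ℕ) (c : ℕ → ℚ) (h : ℕ) :
    motPrefixSum (n + 2) (fun _ => 0) c (h + 1) =
      (if h = 0 then 0 else motPrefixSum n (fun _ => 0) c (h - 1)) +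
        (c h + c (h + 1)) * motPrefixSum n (fun _ => 0) c (h + 1) +
        c (h + 1) * c (h + 2) * motPrefixSum n (fun _ => 0) c (h + 3) := by
  rw [motPrefixSum_succ (n + 1), if_neg h.succ_ne_zero, Nat.add_sub_cancel, motPrefixSum_succ n,
    motPrefixSum_succ n _ _ (h + 2), if_neg (show h + 2 ≠ 0 by omega),
    show h + 2 - 1 = h + 1 by omega]
  ring

lemma motPrefixSum_two_mul_add_one (c : ℕ → ℚ) (K h : ℕ) :
    motPrefixSum (2 * K + 1) (fun _ => 0) c (2 * h + 1) =
      motPrefixSum K (fun h => c (2 * h) + c (2 * h + 1))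
        (fun h => c (2 * h + 1) * c (2 * h + 2)) h := by
  induction K generalizing h with
  | zero => rcases h with _ | h <;> simp [motPrefixSum_succ, motPrefixSum_zero]
  | succ K ih =>
    rw [show 2 * (K + 1) + 1 = 2 * K + 1 + 2 by ring, motPrefixSum_add_two_of_flat_zero,
      motPrefixSum_succ K, show 2 * h + 3 = 2 * (h + 1) + 1 by ring, ih, ih]
    rcases h with _ | h
    · rw [if_pos rfl, if_pos rfl]
    · rw [if_neg (by omega), if_neg h.succ_ne_zero, show 2 * (h + 1) - 1 = 2 * h + 1 by omega, ih]
      rfl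

theorem dyckSum_succ_eq_mul_motSum (c : ℕ → ℚ) (n : ℕ) :
    dyckSum (n + 1) c =
      c 0 * motSum n (fun h => c (2 * h) + c (2 * h + 1))
        (fun h => c (2 * h + 1) * c (2 * h + 2)) := by
  rw [dyckSum_eq_motSum, motSum_eq_motPrefixSum, motSum_eq_motPrefixSum,
    ← motPrefixSum_two_mul_add_one, show 2 * (n + 1) = 2 * n + 1 + 1 by ring, motPrefixSum_succ]
  simp

lemma fibZ_natCast (n : ℕ) : fibZ n = Nat.fib n := rfl

lemma fibZ_add_two (m : ℤ) : fibZ (m + 2) = fibZ (m + 1) + fibZ m := by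
  match m with
  | Int.ofNat n =>
    show fibZ ((n + 2 : ℕ) : ℤ) = fibZ ((n + 1 : ℕ) : ℤ) + fibZ (n : ℤ)
    simp only [fibZ_natCast, Nat.fib_add_two]
    push_cast
    ring
  | Int.negSucc 0 => rfl
  | Int.negSucc 1 => rfl
  | Int.negSucc (k + 2) =>
    rw [show Int.negSucc (k + 2) + 2 = Int.negSucc k by omega,
      show Int.negSucc (k + 2) + 1 = Int.negSucc (k + 1) by omega]
    simp only [fibZ, Nat.fib_add_two, pow_succ]
    push_cast
    ring

lemma fibZ_add_two_add_fibZ_sub_two (m : ℤ) : fibZ (m + 2) + fibZ (m - 2) = 3 * fibZ m := by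
  have h1 := fibZ_add_two (m - 1)
  have h2 := fibZ_add_two (m - 2)
  rw [show m - 1 + 2 = m + 1 by ring, sub_add_cancel] at h1
  rw [sub_add_cancel, show m - 2 + 1 = m - 1 by ring] at h2
  linear_combination fibZ_add_two m + h1 - h2

lemma fibZ_pos_of_odd {m : ℤ} (hm : Odd m) : 0 < fibZ m := by
  obtain ⟨k, hk⟩ := hm
  match m with
  | Int.ofNat n =>
    rw [Int.ofNat_eq_natCast] at hk ⊢
    rw [fibZ_natCast]
    exact_mod_cast Nat.fib_pos.mpr (by omega)
  | Int.negSucc n =>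
    have hn : Even n := Nat.even_iff.mpr (by omega)
    simp only [fibZ, hn.neg_one_pow, one_mul]
    exact_mod_cast Nat.fib_pos.mpr (by omega)

section FibonacciRatios

variable {d : ℕ → ℚ}
  (hodd : ∀ h : ℕ, d (2 * h + 1) = (fibZ (2 * h + 1) : ℚ) / (fibZ (2 * h - 1) : ℚ))
  (heven : ∀ h : ℕ, d (2 * h + 2) = (fibZ (2 * h - 1) : ℚ) / (fibZ (2 * h + 1) : ℚ))
include hodd heven

lemma mul_eq_one_of_fibZ_ratio (h : ℕ) : d (2 * h + 1) * d (2 * h + 2) = 1 := by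
  have h1 : (fibZ (2 * h - 1) : ℚ) ≠ 0 :=
    Int.cast_ne_zero.mpr (fibZ_pos_of_odd ⟨(h : ℤ) - 1, by ring⟩).ne'
  have h2 : (fibZ (2 * h + 1) : ℚ) ≠ 0 :=
    Int.cast_ne_zero.mpr (fibZ_pos_of_odd (odd_two_mul_add_one _)).ne'
  rw [hodd, heven]
  field_simp

lemma add_eq_of_fibZ_ratio (hd0 : d 0 = 1) (h : ℕ) :
    d (2 * h) + d (2 * h + 1) = if h = 0 then 2 else 3 := by
  rcases h with _ | h
  · norm_num [hodd 0, hd0, show fibZ 1 = 1 from rfl, show fibZ (-1) = 1 from rfl]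
  · have hF : (fibZ (2 * h + 1) : ℚ) ≠ 0 :=
      Int.cast_ne_zero.mpr (fibZ_pos_of_odd (odd_two_mul_add_one _)).ne'
    rw [show 2 * (h + 1) = 2 * h + 2 by ring, heven, show 2 * h + 2 + 1 = 2 * (h + 1) + 1 by ring,
      hodd, if_neg h.succ_ne_zero]
    push_cast
    rw [show 2 * ((h : ℤ) + 1) + 1 = 2 * h + 1 + 2 by ring,
      show 2 * ((h : ℤ) + 1) - 1 = 2 * h + 1 by ring,
      show 2 * (h : ℤ) - 1 = 2 * h + 1 - 2 by ring,
      ← add_div, div_eq_iff hF, add_comm]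
    have key :=
      congrArg (Int.cast : ℤ → ℚ) (fibZ_add_two_add_fibZ_sub_two (2 * (h : ℤ) + 1))
    rwa [Int.cast_add, Int.cast_mul, Int.cast_ofNat] at key

end FibonacciRatios

theorem dyck_d_eq_motzkin_two_three_general
(d : ℕ → ℚ) (hd0 : d 0 = 1)
    (hdodd : ∀ m : ℕ, 1 ≤ m →
      d (2 * m - 1) = (fibZ (2 * (m : ℤ) - 1) : ℚ) / (fibZ (2 * (m : ℤ) - 3) : ℚ))
    (hdeven : ∀ m : ℕ, 1 ≤ m →
      d (2 * m) = (fibZ (2 * (m : ℤ) - 3) : ℚ) / (fibZ (2 * (m : ℤ) - 1) : ℚ))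
    (n : ℕ) :
    dyckSum n d = motSum (n - 1) (fun m => if m = 0 then 2 else 3) (fun _ => 1) := by
  have hodd : ∀ h : ℕ, d (2 * h + 1) = (fibZ (2 * h + 1) : ℚ) / (fibZ (2 * h - 1) : ℚ) :=
    fun h => by
      convert hdodd (h + 1) (by omega) using 4 <;> omega
  have heven : ∀ h : ℕ, d (2 * h + 2) = (fibZ (2 * h - 1) : ℚ) / (fibZ (2 * h + 1) : ℚ) :=
    fun h => by
      convert hdeven (h + 1) (by omega) using 4 <;> omega
  cases n with
  | zero => simp [dyckSum_eq_motSum, motSum_eq_motPrefixSum, motPrefixSum_zero]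
  | succ n =>
    rw [dyckSum_succ_eq_mul_motSum, hd0, one_mul, Nat.add_sub_cancel]
    congr 1 <;> funext h
    · exact add_eq_of_fibZ_ratio hodd heven hd0 h
    · exact mul_eq_one_of_fibZ_ratio hodd heven h

/-- With `α = (2,3,3,…)` and `β = (1,1,…)`, `Dyck_n(d) = Mot_{n-1}(α, β)` for `n ≥ 1`. -/
theorem dyck_d_eq_motzkin_two_three
(d : ℕ → ℚ) (hd0 : d 0 = 1)
    (hdodd : ∀ m : ℕ, 1 ≤ m →
      d (2 * m - 1) = (fibZ (2 * (m : ℤ) - 1) : ℚ) / (fibZ (2 * (m : ℤ) - 3) : ℚ))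
    (hdeven : ∀ m : ℕ, 1 ≤ m →
      d (2 * m) = (fibZ (2 * (m : ℤ) - 3) : ℚ) / (fibZ (2 * (m : ℤ) - 1) : ℚ))
    (n : ℕ) (hn : 1 ≤ n) :
    dyckSum n d = motSum (n - 1) (fun m => if m = 0 then 2 else 3) (fun _ => 1) :=
  dyck_d_eq_motzkin_two_three_general d hd0 hdodd hdeven n
end

section
/- Let α be the sequence with α_0=2 and α_m=3 for m≥1, and let β be the constant sequence β_m=1 for all m≥0. Then for every n≥1, Mot_n(α,β) = #SCH_even(n). -/
/-- A step of a Schröder path: up `(1,1)`, down `(1,-1)`, or double horizontal `(2,0)`. -/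
inductive SStep : Type
  | up : SStep
  | down : SStep
  | hh : SStep
  deriving DecidableEq

/-- The vertical displacement of a Schröder step. -/
def SStep.val : SStep → ℤ
  | .up => 1
  | .down => -1
  | .hh => 0

/-- The horizontal displacement (width) of a Schröder step. -/
def SStep.width : SStep → ℕ
  | .up => 1
  | .down => 1
  | .hh => 2

/-- The height of the path after its first `k` steps. -/
def sHeight (l : List SStep) (k : ℕ) : ℤ := ((l.take k).map SStep.val).sum

/-- A list of steps is a Schröder path of length `2n` if its total width is `2n`,
it never goes below the x-axis, and it ends at height 0. -/
def IsSchroeder (n : ℕ) (l : List SStep) : Prop :=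
  (l.map SStep.width).sum = 2 * n ∧ (∀ k : ℕ, 0 ≤ sHeight l k) ∧ sHeight l l.length = 0

/-- All double horizontal steps of the path have even height. -/
def AllHHEven (l : List SStep) : Prop :=
  ∀ i : ℕ, l.getD i SStep.up = SStep.hh → Even (sHeight l (i + 1))

/-- The path has no peak (an up step immediately followed by a down step) at even height,
the height of a peak being the height reached by its up step. -/
def NoEvenPeak (l : List SStep) : Prop :=
  ∀ i : ℕ, l.getD i SStep.down = SStep.up → l.getD (i + 1) SStep.up = SStep.down →
    ¬ Even (sHeight l (i + 1))

/-!
With `α = (2, 3, 3, …)` and `β = (1, 1, …)`, `Mot_n(α, β)` counts Motzkin paths whose flat steps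
carry one of three colors, the third color being forbidden at height 0. Doubling every height,
send `U ↦ UU`, `D ↦ DD` and the three colored flat steps to `H²`, `UD`, `DU`: the forbidden
color is exactly the one whose block would dip below the axis, and all `H²` steps land at even
height. Conversely, since the parity of the height counts the non-`H²` steps, a Schröder path
whose `H²` steps sit at even height (and which ends at height 0) splits uniquely into such blocks.
-/

open Finset

theorem forall_nonneg_add_sum_take_cons {α : Type*} (f : α → ℤ) (h : ℤ) (a : α) (l : List α) :
    (∀ k, 0 ≤ h + (((a :: l).take k).map f).sum) ↔
      0 ≤ h ∧ ∀ k, 0 ≤ h + f a + ((l.take k).map f).sum := by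
  rw [← Nat.and_forall_add_one]
  simp [add_assoc]

theorem add_sum_take_succ_cons {α : Type*} (f : α → ℤ) (h : ℤ) (a : α) (l : List α) (k : ℕ) :
    h + (((a :: l).take (k + 1)).map f).sum = h + f a + ((l.take k).map f).sum := by
  simp [add_assoc]

theorem sHeight_zero (l : List SStep) : sHeight l 0 = 0 := rfl

theorem sHeight_cons_succ (s : SStep) (l : List SStep) (k : ℕ) :
    sHeight (s :: l) (k + 1) = s.val + sHeight l k := by
  simp [sHeight]

/-- `hh`, `peak` and `valley` are the three colors of a flat step, named after their blocks. -/
inductive ColoredStep : Type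
  | up | down | hh | peak | valley
  deriving DecidableEq

instance : Fintype ColoredStep :=
  ⟨{.up, .down, .hh, .peak, .valley}, fun c => by cases c <;> simp⟩

namespace ColoredStep

def toMStep : ColoredStep → MStep
  | up => .up
  | down => .down
  | _ => .flat

def block : ColoredStep → List SStep
  | up => [.up, .up]
  | down => [.down, .down]
  | hh => [.hh]
  | peak => [.up, .down]
  | valley => [.down, .up]

end ColoredStep

open ColoredStep

def toSchroeder (m : List ColoredStep) : List SStep := m.flatMap block

def IsColoredMotzkin (m : List ColoredStep) : Prop :=
  IsMotzkin (m.map toMStep) ∧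
    ∀ i, m.getD i .up = .valley → 0 < mHeight (m.map toMStep) (i + 1)

theorem toSchroeder_nil : toSchroeder [] = [] := rfl

theorem toSchroeder_cons (c : ColoredStep) (m : List ColoredStep) :
    toSchroeder (c :: m) = c.block ++ toSchroeder m := rfl

/-- The Schröder offset `H = 2 * h` is a separate variable so that the shifted offsets of the
induction step match the induction hypothesis syntactically. -/
theorem nonneg_sHeight_toSchroeder_iff (m : List ColoredStep) (h H : ℤ) (hH : H = 2 * h) :
    (∀ k, 0 ≤ H + sHeight (toSchroeder m) k) ↔
      (∀ k, 0 ≤ h + mHeight (m.map toMStep) k) ∧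
      ∀ i, m.getD i .up = .valley → 0 < h + mHeight (m.map toMStep) (i + 1) := by
  induction m generalizing h H with
  | nil => simp [toSchroeder, sHeight, mHeight]; omega
  | cons c m ih =>
    unfold sHeight mHeight at *
    rw [List.map_cons, forall_nonneg_add_sum_take_cons,
      ← Nat.and_forall_add_one (p := fun i => _ → _)]
    cases c <;>
      simp only [toSchroeder_cons, block, List.cons_append, List.nil_append,
        forall_nonneg_add_sum_take_cons, add_sum_take_succ_cons, List.getD_cons_succ,
        List.getD_cons_zero, toMStep, SStep.val, MStep.val, reduceCtorEq, false_implies,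
        true_and, forall_const]
    · rw [ih (h + 1) (H + 1 + 1) (by omega)]; grind
    · rw [ih (h + -1) (H + -1 + -1) (by omega)]
      -- the ground term `take 0` lets grind use the instance `k = 0`, i.e. `1 ≤ h`
      have := List.take_zero (l := m.map toMStep)
      grind
    · rw [ih (h + 0) (H + 0) (by omega)]; grind
    · rw [ih (h + 0) (H + 1 + -1) (by omega)]; grind
    · rw [ih (h + 0) (H + -1 + 1) (by omega)]; grind

theorem sHeight_toSchroeder_length (m : List ColoredStep) :
    sHeight (toSchroeder m) (toSchroeder m).length =
      2 * mHeight (m.map toMStep) (m.map toMStep).length := by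
  simp only [sHeight, mHeight, List.take_length]
  induction m with
  | nil => rfl
  | cons c m ih =>
    cases c <;> simp [toSchroeder_cons, block, toMStep, SStep.val, MStep.val, ih] <;> ring

theorem sum_width_toSchroeder (m : List ColoredStep) :
    ((toSchroeder m).map SStep.width).sum = 2 * m.length := by
  induction m with
  | nil => rfl
  | cons c m ih => cases c <;> simp [toSchroeder_cons, block, SStep.width, ih] <;> ring

theorem isSchroeder_toSchroeder_iff (n : ℕ) (m : List ColoredStep) :
    IsSchroeder n (toSchroeder m) ↔ m.length = n ∧ IsColoredMotzkin m := by
  have hpos := nonneg_sHeight_toSchroeder_iff m 0 0 rfl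
  simp only [zero_add] at hpos
  rw [IsSchroeder, IsColoredMotzkin, IsMotzkin, hpos, sum_width_toSchroeder,
    sHeight_toSchroeder_length]
  grind

theorem allHHEven_cons_hh (l : List SStep) : AllHHEven (.hh :: l) ↔ AllHHEven l := by
  rw [AllHHEven, ← Nat.and_forall_add_one]
  simp [SStep.val, sHeight, AllHHEven]

theorem allHHEven_cons_cons {a b : SStep} (ha : a ≠ .hh) (hb : b ≠ .hh) (l : List SStep) :
    AllHHEven (a :: b :: l) ↔ AllHHEven l := by
  have hab : Even (a.val + b.val) := by cases a <;> cases b <;> simp_all [SStep.val]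
  rw [AllHHEven, ← Nat.and_forall_add_one, ← Nat.and_forall_add_one]
  simp [ha, hb, sHeight_cons_succ, ← add_assoc, Int.even_add, hab, AllHHEven]

theorem allHHEven_toSchroeder (m : List ColoredStep) : AllHHEven (toSchroeder m) := by
  induction m with
  | nil => simp [AllHHEven, toSchroeder]
  | cons c m ih =>
    cases c <;> simp [toSchroeder_cons, block, allHHEven_cons_hh, allHHEven_cons_cons, ih]

def ofSchroeder : List SStep → List ColoredStep
  | [] => []
  | .hh :: l => .hh :: ofSchroeder l
  | .up :: .up :: l => .up :: ofSchroeder l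
  | .down :: .down :: l => .down :: ofSchroeder l
  | .up :: .down :: l => .peak :: ofSchroeder l
  | .down :: .up :: l => .valley :: ofSchroeder l
  -- unreachable from paths with even final height and all `H²` steps at even height
  | [.up] | [.down] | .up :: .hh :: _ | .down :: .hh :: _ => []

theorem ofSchroeder_toSchroeder (m : List ColoredStep) : ofSchroeder (toSchroeder m) = m := by
  induction m with
  | nil => rfl
  | cons c m ih => cases c <;> simp [toSchroeder_cons, block, ofSchroeder, ih]

theorem toSchroeder_ofSchroeder (l : List SStep) (hl : AllHHEven l)
    (hend : Even (sHeight l l.length)) : toSchroeder (ofSchroeder l) = l := by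
  fun_induction ofSchroeder l <;>
    simp_all [toSchroeder_nil, toSchroeder_cons, block, allHHEven_cons_hh, allHHEven_cons_cons,
      sHeight_zero, sHeight_cons_succ, SStep.val, parity_simps]
  all_goals exact absurd (hl 1 rfl) (by simp [sHeight, SStep.val])

def colors {n : ℕ} (f : Fin n → MStep) (i : Fin n) : Finset ColoredStep :=
  {c | c.toMStep = f i ∧ (c = .valley → 0 < mHeight (List.ofFn f) (i + 1))}

theorem getD_ofFn {α : Type*} {n : ℕ} (g : Fin n → α) (i : Fin n) (d : α) :
    (List.ofFn g).getD i d = g i := by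
  simp

theorem isColoredMotzkin_ofFn_and_iff {n : ℕ} {f : Fin n → MStep}
    (hf : IsMotzkin (List.ofFn f)) (g : Fin n → ColoredStep) :
    (IsColoredMotzkin (List.ofFn g) ∧ toMStep ∘ g = f) ↔ ∀ i, g i ∈ colors f i := by
  simp only [IsColoredMotzkin, colors, mem_filter, mem_univ, true_and, List.map_ofFn]
  constructor
  · rintro ⟨⟨-, hvalley⟩, rfl⟩ i
    exact ⟨rfl, fun hi => hvalley i (by rw [getD_ofFn, hi])⟩
  · intro h
    obtain rfl : toMStep ∘ g = f := funext fun i => (h i).1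
    refine ⟨⟨hf, fun i hi => ?_⟩, rfl⟩
    by_cases hin : i < n
    · exact (h ⟨i, hin⟩).2 (by rwa [getD_ofFn g ⟨i, hin⟩] at hi)
    · simp [hin] at hi

theorem card_filter_toMStep (s : MStep) (P : Prop) [Decidable P] :
    #{c : ColoredStep | c.toMStep = s ∧ (c = .valley → P)} =
      match s with
      | .flat => if P then 3 else 2
      | _ => 1 := by
  by_cases hP : P <;> cases s <;> simp [hP] <;> rfl

theorem mWeight_eq_prod_card_colors {n : ℕ} (f : Fin n → MStep) :
    mWeight (fun m => if m = 0 then 2 else 3) (fun _ => 1) (List.ofFn f) =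
      ∏ i, (#(colors f i) : ℚ) := by
  rw [mWeight, List.length_ofFn, ← Fin.prod_univ_eq_prod_range]
  refine prod_congr rfl fun i _ => ?_
  rw [getD_ofFn, colors, card_filter_toMStep]
  cases f i <;> simp only [Int.toNat_eq_zero, ← not_lt, ite_not] <;> simp

open Classical in
theorem motSum_eq_card_coloredMotzkin (n : ℕ) :
    motSum n (fun m => if m = 0 then 2 else 3) (fun _ => 1) =
      #{g : Fin n → ColoredStep | IsColoredMotzkin (List.ofFn g)} := by
  rw [motSum, card_eq_sum_card_fiberwise (f := (toMStep ∘ ·)) (t := univ)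
    fun _ _ => mem_coe.2 (mem_univ _), Nat.cast_sum]
  refine sum_congr rfl fun f _ => ?_
  rw [filter_filter]
  split_ifs with hf
  · rw [mWeight_eq_prod_card_colors, ← Nat.cast_prod, ← Fintype.card_piFinset]
    congr 2
    ext g
    simp [isColoredMotzkin_ofFn_and_iff hf, Fintype.mem_piFinset]
  · rw [filter_false_of_mem, card_empty, Nat.cast_zero]
    rintro g - ⟨hg, rfl⟩
    exact hf (by simpa [IsColoredMotzkin, List.map_ofFn] using hg.1)

theorem toSchroeder_injective : Function.Injective toSchroeder :=
  Function.LeftInverse.injective ofSchroeder_toSchroeder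

theorem card_coloredMotzkin_eq_card_schroeder (n : ℕ) :
    Nat.card {g : Fin n → ColoredStep // IsColoredMotzkin (List.ofFn g)} =
      Nat.card {l : List SStep // IsSchroeder n l ∧ AllHHEven l} := by
  refine Nat.card_eq_of_bijective (fun g => ⟨toSchroeder (List.ofFn g.1),
    (isSchroeder_toSchroeder_iff n _).2 ⟨List.length_ofFn, g.2⟩, allHHEven_toSchroeder _⟩)
    ⟨fun g g' h => ?_, ?_⟩
  · exact Subtype.ext (List.ofFn_injective (toSchroeder_injective (congrArg Subtype.val h)))
  · rintro ⟨l, hl, hhh⟩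
    have hdec : toSchroeder (ofSchroeder l) = l :=
      toSchroeder_ofSchroeder l hhh (by rw [hl.2.2]; exact Even.zero)
    rw [← hdec, isSchroeder_toSchroeder_iff] at hl
    obtain ⟨rfl, hm⟩ := hl
    exact ⟨⟨(ofSchroeder l).get, by rwa [List.ofFn_get]⟩, by simp [List.ofFn_get, hdec]⟩

theorem motzkin_two_three_eq_schroeder_even_general (n : ℕ) :
    motSum n (fun m => if m = 0 then 2 else 3) (fun _ => 1) =
      (Nat.card {l : List SStep // IsSchroeder n l ∧ AllHHEven l} : ℚ) := by
  classical
  rw [motSum_eq_card_coloredMotzkin, ← card_coloredMotzkin_eq_card_schroeder,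
    Nat.card_eq_fintype_card, Fintype.card_subtype]

/-- With `α = (2,3,3,…)` and `β = (1,1,…)`, `Mot_n(α, β) = #SCH_even(n)` for `n ≥ 1`. -/
theorem motzkin_two_three_eq_schroeder_even (n : ℕ) (hn : 1 ≤ n) :
    motSum n (fun m => if m = 0 then 2 else 3) (fun _ => 1) =
      (Nat.card {l : List SStep // IsSchroeder n l ∧ AllHHEven l} : ℚ) :=
  motzkin_two_three_eq_schroeder_even_general n
end
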